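/- For a positive integer n, y(n) > 0 if and only if either 1 ≤ n ≤ 4, or 336 ≤ n ≤ 337, or 351 ≤ n ≤ 364, or n ≥ 369. -/

import Mathlib

/-!
With `z(n) = ⌊(2n - 1)/3⌋` and `m(n) = ⌊√(2n)⌋`, `y(n) > 0` says `n ^ (m - 1) < 2 ^ k` with
`k = 2n - 2z - m + 2 ≥ (2n + 8)/3 - m`. Multiplying the cube of this by `2 ^ (3(m - 1))` and using
`2n < (m + 1)²`, it follows from `(m + 1) ^ (6(m - 1)) ≤ 2 ^ (m²)`, which holds as soon as
`(m + 1)⁶ ≤ 2 ^ m`, i.e. for `m ≥ 30`, i.e. for `n ≥ 450`. The finitely many `n < 450` are checked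
by computation.
-/

/-- The exponent `2n - 2z(n) - m(n) + 2` of `2` in `y(n)`. -/
def powerOfTwo (n : ℕ) : ℕ := 2 * n + 2 - 2 * ((2 * n - 1) / 3) - Nat.sqrt (2 * n)

theorem eq_sqrt_of_forall_sq_le {m N : ℕ} (hm : (m : ℤ) ^ 2 ≤ N)
    (hmax : ∀ w : ℕ, (w : ℤ) ^ 2 ≤ N → w ≤ m) : m = Nat.sqrt N := by
  refine Nat.eq_sqrt'.2 ⟨by exact_mod_cast hm, ?_⟩
  by_contra! h
  have := hmax (m + 1) (by exact_mod_cast h)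
  omega

theorem eq_ediv_of_forall_mul_lt {z N : ℤ} (hz : 3 * z < N) (hmax : ∀ w : ℤ, 3 * w < N → w ≤ z) :
    z = (N - 1) / 3 := by
  have := hmax ((N - 1) / 3) (by omega)
  omega

theorem three_mul_sqrt_le (N : ℕ) : 3 * Nat.sqrt N ≤ N + 2 := by
  have := Nat.sqrt_le N
  rcases Nat.lt_or_ge (Nat.sqrt N) 3 with h | h
  · interval_cases Nat.sqrt N <;> omega
  · nlinarith

theorem cast_powerOfTwo (n : ℕ) (hn : 1 ≤ n) :
    (powerOfTwo n : ℤ) = 2 * n - 2 * ((2 * n - 1) / 3) + 2 - Nat.sqrt (2 * n) := by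
  have := three_mul_sqrt_le (2 * n)
  unfold powerOfTwo
  omega

theorem succ_pow_six_le_two_pow {s : ℕ} (hs : 30 ≤ s) : (s + 1) ^ 6 ≤ 2 ^ s := by
  induction s, hs using Nat.le_induction with
  | base => norm_num
  | succ s hs ih =>
    -- `(s + 2)/(s + 1) ≤ 10/9` and `(10/9)⁶ ≤ 2`
    have : 9 ^ 6 * (s + 2) ^ 6 ≤ 9 ^ 6 * (2 * (s + 1) ^ 6) := by
      calc 9 ^ 6 * (s + 2) ^ 6 = (9 * (s + 2)) ^ 6 := by ring
        _ ≤ (10 * (s + 1)) ^ 6 := Nat.pow_le_pow_left (by omega) 6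
        _ = 10 ^ 6 * (s + 1) ^ 6 := mul_pow _ _ _
        _ ≤ 9 ^ 6 * (2 * (s + 1) ^ 6) := by omega
    calc (s + 1 + 1) ^ 6 ≤ 2 * (s + 1) ^ 6 := Nat.le_of_mul_le_mul_left this (by norm_num)
      _ ≤ 2 * 2 ^ s := by omega
      _ = 2 ^ (s + 1) := by ring

theorem succ_pow_le_two_pow_sq {s : ℕ} (hs : 30 ≤ s) : (s + 1) ^ (6 * (s - 1)) ≤ 2 ^ (s * s) :=
  calc (s + 1) ^ (6 * (s - 1)) = ((s + 1) ^ 6) ^ (s - 1) := pow_mul _ _ _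
    _ ≤ (2 ^ s) ^ (s - 1) := Nat.pow_le_pow_left (succ_pow_six_le_two_pow hs) _
    _ = 2 ^ (s * (s - 1)) := (pow_mul _ _ _).symm
    _ ≤ 2 ^ (s * s) := Nat.pow_le_pow_right (by norm_num) (Nat.mul_le_mul_left _ (by omega))

theorem pow_lt_two_pow_powerOfTwo {n : ℕ} (hn : 450 ≤ n) :
    n ^ (Nat.sqrt (2 * n) - 1) < 2 ^ powerOfTwo n := by
  set s := Nat.sqrt (2 * n) with hs_def
  set k := powerOfTwo n
  have hs_sq : s * s ≤ 2 * n := Nat.sqrt_le (2 * n)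
  have hs_lt : 2 * n < (s + 1) ^ 2 := by rw [sq]; exact Nat.lt_succ_sqrt (2 * n)
  have hs30 : 30 ≤ s := by rw [hs_def, Nat.le_sqrt]; omega
  have hk : 2 * n ≤ 3 * k + 3 * (s - 1) := by
    have := three_mul_sqrt_le (2 * n)
    simp only [k, powerOfTwo]
    omega
  have hcube : (2 ^ (s - 1) * n ^ (s - 1)) ^ 3 < (2 ^ (s - 1) * 2 ^ k) ^ 3 :=
    calc (2 ^ (s - 1) * n ^ (s - 1)) ^ 3 = (2 * n) ^ (3 * (s - 1)) := by ring
      _ < ((s + 1) ^ 2) ^ (3 * (s - 1)) := Nat.pow_lt_pow_left hs_lt (by omega)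
      _ = (s + 1) ^ (6 * (s - 1)) := by rw [← pow_mul]; ring
      _ ≤ 2 ^ (s * s) := succ_pow_le_two_pow_sq hs30
      _ ≤ 2 ^ (3 * k + 3 * (s - 1)) := Nat.pow_le_pow_right (by norm_num) (by omega)
      _ = (2 ^ (s - 1) * 2 ^ k) ^ 3 := by ring
  exact Nat.lt_of_mul_lt_mul_left (lt_of_pow_lt_pow_left₀ 3 (Nat.zero_le _) hcube)

theorem pow_lt_two_pow_powerOfTwo_iff {n : ℕ} (hn : 1 ≤ n) :
    n ^ (Nat.sqrt (2 * n) - 1) < 2 ^ powerOfTwo n ↔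
      n ≤ 4 ∨ (336 ≤ n ∧ n ≤ 337) ∨ (351 ≤ n ∧ n ≤ 364) ∨ 369 ≤ n := by
  rcases Nat.lt_or_ge n 450 with h | h
  · have small : ∀ n < 450, 1 ≤ n → (n ^ (Nat.sqrt (2 * n) - 1) < 2 ^ powerOfTwo n ↔
        n ≤ 4 ∨ (336 ≤ n ∧ n ≤ 337) ∨ (351 ≤ n ∧ n ≤ 364) ∨ 369 ≤ n) := by
      decide +kernel
    exact small n h hn
  · exact iff_of_true (pow_lt_two_pow_powerOfTwo h) (by omega)

theorem stmt_general
    (z : ℕ → ℤ) (m : ℕ → ℕ) (c : ℕ → ℤ) (y : ℕ → ℚ)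
    (hz : ∀ n : ℕ, 1 ≤ n → 3 * z n < 2 * (n : ℤ) ∧ ∀ w : ℤ, 3 * w < 2 * (n : ℤ) → w ≤ z n)
    (hm : ∀ n : ℕ, 1 ≤ n → (m n : ℤ) ^ 2 ≤ 2 * (n : ℤ) ∧ ∀ w : ℕ, (w : ℤ) ^ 2 ≤ 2 * (n : ℤ) → w ≤ m n)
    (hc : ∀ n : ℕ, c n = 2 * (n : ℤ) - 2 * z n + 2)
    (hy : ∀ n : ℕ, y n = (2 : ℚ) ^ (c n - (m n : ℤ)) - (n : ℚ) ^ ((m n : ℤ) - 1)) :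
    ∀ n : ℕ, 1 ≤ n →
      (y n > 0 ↔ n ≤ 4 ∨ (336 ≤ n ∧ n ≤ 337) ∨ (351 ≤ n ∧ n ≤ 364) ∨ 369 ≤ n) := by
  intro n hn
  have hz_eq : z n = (2 * n - 1) / 3 := eq_ediv_of_forall_mul_lt (hz n hn).1 (hz n hn).2
  have hm_eq : m n = Nat.sqrt (2 * n) :=
    eq_sqrt_of_forall_sq_le (by exact_mod_cast (hm n hn).1)
      fun w hw => (hm n hn).2 w (by exact_mod_cast hw)
  have hm_pos : 0 < Nat.sqrt (2 * n) := Nat.sqrt_pos.2 (by omega)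
  have h_exp_two : c n - m n = powerOfTwo n := by
    rw [cast_powerOfTwo n hn, hc, hz_eq, hm_eq]
  have h_exp_n : (m n : ℤ) - 1 = (Nat.sqrt (2 * n) - 1 : ℕ) := by omega
  rw [hy, h_exp_two, h_exp_n, zpow_natCast, zpow_natCast, gt_iff_lt, sub_pos,
    ← pow_lt_two_pow_powerOfTwo_iff hn]
  exact_mod_cast Iff.rfl

theorem stmt
    (z : ℕ → ℤ) (m r : ℕ → ℕ) (c x : ℕ → ℤ) (y : ℕ → ℚ)
    (hz : ∀ n : ℕ, 1 ≤ n → 3 * z n < 2 * (n : ℤ) ∧ ∀ w : ℤ, 3 * w < 2 * (n : ℤ) → w ≤ z n)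
    (hm : ∀ n : ℕ, 1 ≤ n → (m n : ℤ) ^ 2 ≤ 2 * (n : ℤ) ∧ ∀ w : ℕ, (w : ℤ) ^ 2 ≤ 2 * (n : ℤ) → w ≤ m n)
    (hr : ∀ n : ℕ, 1 ≤ n → n ≤ 2 ^ r n ∧ ∀ s : ℕ, n ≤ 2 ^ s → r n ≤ s)
    (hc : ∀ n : ℕ, c n = 2 * (n : ℤ) - 2 * z n + 2)
    (hx : ∀ n : ℕ, x n = z n - ((r n : ℤ) + 1) * (m n : ℤ))
    (hy : ∀ n : ℕ, y n = (2 : ℚ) ^ (c n - (m n : ℤ)) - (n : ℚ) ^ ((m n : ℤ) - 1)) :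
    ∀ n : ℕ, 1 ≤ n →
      (y n > 0 ↔ n ≤ 4 ∨ (336 ≤ n ∧ n ≤ 337) ∨ (351 ≤ n ∧ n ≤ 364) ∨ 369 ≤ n) :=
  stmt_general z m c y hz hm hc hy
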